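/- Let S, H be real n×n matrices and define the sequence M : ℕ → Matrix by M 1 = H and M k = M (k-1) * S + S^(k-1) * H for k ≥ 2. Then the series ∑_{k=1}^∞ (1/k!) • M k converges, and the Fréchet derivative of the matrix exponential at S applied to H equals its sum: (fderiv ℝ exp S) H = ∑_{k=1}^∞ (1/k!) • M k. -/

import Mathlib

open Matrix NormedSpace

attribute [local instance] Matrix.frobeniusNormedAddCommGroup Matrix.frobeniusNormedSpace

/-! The derivative of `y ↦ y ^ k` at `S` in direction `H` obeys the recursion defining `M k`
(product rule for `y ^ k = y ^ (k - 1) * y`). Differentiate the exponential series termwise: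
on the ball of radius `r = ‖S‖ + 1` the derivative of `y ^ (k + 1) / (k + 1)!` has operator
norm at most `r ^ k / k!`, which is summable, so the series of derivatives converges to the
derivative of `exp`. -/

open scoped Nat RightActions

attribute [local instance] Matrix.frobeniusNormedRing Matrix.frobeniusNormedAlgebra

section PowFDeriv

variable (𝕂 : Type*) {𝔸 : Type*} [RCLike 𝕂] [NormedRing 𝔸] [NormedAlgebra 𝕂 𝔸]

noncomputable def powFDeriv (x : 𝔸) : ℕ → 𝔸 →L[𝕂] 𝔸
  | 0 => 0
  | k + 1 => x ^ k •> ContinuousLinearMap.id 𝕂 𝔸 + powFDeriv x k <• x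

variable {𝕂}

@[simp]
theorem powFDeriv_zero (x : 𝔸) : powFDeriv 𝕂 x 0 = 0 := rfl

theorem powFDeriv_succ_apply (x h : 𝔸) (k : ℕ) :
    powFDeriv 𝕂 x (k + 1) h = x ^ k * h + powFDeriv 𝕂 x k h * x := by
  simp [powFDeriv]

theorem hasFDerivAt_pow_powFDeriv (x : 𝔸) (k : ℕ) :
    HasFDerivAt (fun y : 𝔸 => y ^ k) (powFDeriv 𝕂 x k) x := by
  induction k with
  | zero => simpa using hasFDerivAt_const (1 : 𝔸) x
  | succ k ih =>
    simp only [pow_succ]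
    exact ih.fun_mul' (hasFDerivAt_id x)

-- `‖1‖ ≤ 1` may fail (the Frobenius norm has `‖1‖ = √n`), so `norm_pow_le` is not available.
omit [RCLike 𝕂] [NormedAlgebra 𝕂 𝔸] in
theorem norm_pow_mul_le (x h : 𝔸) (k : ℕ) : ‖x ^ k * h‖ ≤ ‖x‖ ^ k * ‖h‖ := by
  induction k with
  | zero => simp
  | succ k ih =>
    calc ‖x ^ (k + 1) * h‖ = ‖x * (x ^ k * h)‖ := by rw [pow_succ', mul_assoc]
      _ ≤ ‖x‖ * (‖x‖ ^ k * ‖h‖) := (norm_mul_le _ _).trans (by gcongr)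
      _ = ‖x‖ ^ (k + 1) * ‖h‖ := by ring

theorem norm_powFDeriv_succ_le (x : 𝔸) (k : ℕ) :
    ‖powFDeriv 𝕂 x (k + 1)‖ ≤ (k + 1) * ‖x‖ ^ k := by
  induction k with
  | zero =>
    refine ContinuousLinearMap.opNorm_le_bound _ (by norm_num) fun h => ?_
    simp [powFDeriv_succ_apply]
  | succ k ih =>
    refine ContinuousLinearMap.opNorm_le_bound _ (by positivity) fun h => ?_
    calc ‖powFDeriv 𝕂 x (k + 1 + 1) h‖
        ≤ ‖x ^ (k + 1) * h‖ + ‖powFDeriv 𝕂 x (k + 1) h‖ * ‖x‖ := by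
          rw [powFDeriv_succ_apply]
          exact (norm_add_le _ _).trans (by gcongr; exact norm_mul_le _ _)
      _ ≤ ‖x‖ ^ (k + 1) * ‖h‖ + (k + 1) * ‖x‖ ^ k * ‖h‖ * ‖x‖ := by
          gcongr
          · exact norm_pow_mul_le x h (k + 1)
          · exact (powFDeriv 𝕂 x (k + 1)).le_of_opNorm_le ih h
      _ = (↑(k + 1) + 1) * ‖x‖ ^ (k + 1) * ‖h‖ := by push_cast; ring

theorem norm_inv_factorial_smul_powFDeriv_le {x : 𝔸} {r : ℝ} (hx : ‖x‖ ≤ r) (k : ℕ) :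
    ‖((k + 1)! : 𝕂)⁻¹ • powFDeriv 𝕂 x (k + 1)‖ ≤ r ^ k / k ! := by
  rw [norm_smul, norm_inv, RCLike.norm_natCast]
  calc ((k + 1)! : ℝ)⁻¹ * ‖powFDeriv 𝕂 x (k + 1)‖
      ≤ ((k + 1)! : ℝ)⁻¹ * ((k + 1) * r ^ k) := by
        gcongr
        exact (norm_powFDeriv_succ_le x k).trans (by gcongr)
    _ = r ^ k / k ! := by
        rw [Nat.factorial_succ]
        push_cast
        field_simp

variable [CompleteSpace 𝔸]

theorem hasSum_exp_sub_one (x : 𝔸) :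
    HasSum (fun k : ℕ => ((k + 1)! : 𝕂)⁻¹ • x ^ (k + 1)) (exp x - 1) := by
  simpa using (hasSum_nat_add_iff' 1).mpr (exp_series_hasSum_exp' (𝕂 := 𝕂) x)

theorem hasSum_fderiv_exp (x : 𝔸) :
    HasSum (fun k : ℕ => ((k + 1)! : 𝕂)⁻¹ • powFDeriv 𝕂 x (k + 1)) (fderiv 𝕂 exp x) := by
  set r := ‖x‖ + 1
  have hxr : x ∈ Metric.ball (0 : 𝔸) r := by simp [r]
  have hbound : ∀ k, ∀ y ∈ Metric.ball (0 : 𝔸) r,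
      ‖((k + 1)! : 𝕂)⁻¹ • powFDeriv 𝕂 y (k + 1)‖ ≤ r ^ k / k ! :=
    fun k y hy => norm_inv_factorial_smul_powFDeriv_le (mem_ball_zero_iff.1 hy).le k
  let := NormedSpace.restrictScalars ℝ 𝕂 𝔸
  have hderiv : HasFDerivAt (fun y : 𝔸 => ∑' k : ℕ, ((k + 1)! : 𝕂)⁻¹ • y ^ (k + 1))
      (∑' k : ℕ, ((k + 1)! : 𝕂)⁻¹ • powFDeriv 𝕂 x (k + 1)) x :=
    hasFDerivAt_tsum_of_isPreconnected (Real.summable_pow_div_factorial r) Metric.isOpen_ball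
      Metric.isPreconnected_ball
      (fun k y _ => (hasFDerivAt_pow_powFDeriv y (k + 1)).const_smul _)
      hbound hxr (hasSum_exp_sub_one x).summable hxr
  have hexp : (exp : 𝔸 → 𝔸) = fun y => 1 + ∑' k : ℕ, ((k + 1)! : 𝕂)⁻¹ • y ^ (k + 1) :=
    funext fun y => by rw [(hasSum_exp_sub_one y).tsum_eq, add_sub_cancel]
  rw [hexp, (hderiv.const_add 1).fderiv]
  exact (Summable.of_norm_bounded (Real.summable_pow_div_factorial r)
    fun k => hbound k x hxr).hasSum

end PowFDeriv

/-- Series representation of the Fréchet derivative of the matrix exponential: with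
`M 1 = H` and `M k = M (k-1) * S + S^(k-1) * H` for `k ≥ 2`, the series
`∑_{k=1}^∞ (1/k!) • M k` converges to `(fderiv ℝ exp S) H`. -/
theorem fderiv_matrix_exp_series (n : ℕ) (S H : Matrix (Fin n) (Fin n) ℝ)
    (M : ℕ → Matrix (Fin n) (Fin n) ℝ) (hM1 : M 1 = H)
    (hMk : ∀ k, 2 ≤ k → M k = M (k - 1) * S + S ^ (k - 1) * H) :
    HasSum (fun k : ℕ => (((k + 1).factorial : ℝ))⁻¹ • M (k + 1))
      (fderiv ℝ (exp : Matrix (Fin n) (Fin n) ℝ → Matrix (Fin n) (Fin n) ℝ) S H) := by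
  have hM : ∀ k : ℕ, M (k + 1) = powFDeriv ℝ S (k + 1) H := by
    intro k
    induction k with
    | zero => simp [powFDeriv_succ_apply, hM1]
    | succ k ih =>
      rw [hMk (k + 2) (by omega), powFDeriv_succ_apply, ← ih]
      exact add_comm _ _
  have hsum := (hasSum_fderiv_exp (𝕂 := ℝ) S).mapL (ContinuousLinearMap.apply ℝ _ H)
  simp only [ContinuousLinearMap.apply_apply, _root_.smul_apply, ← hM] at hsum
  exact hsum
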